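/- The equilibrium state attains the supremum: Let f:Ω→ℝ be α-Hölder, 0<α<1, and suppose λ_f>0, a strictly positive continuous function h_f with ∫_Ω h_f dν_f = 1, and a Borel probability measure ν_f satisfy L_f h_f = λ_f h_f and ∫_Ω (L_f φ) dν_f = λ_f ∫_Ω φ dν_f for every continuous φ. Let m_f be the Borel probability measure on Ω with dm_f = h_f dν_f. Then m_f is σ-invariant and h(m_f) + ∫_Ω f dm_f = log λ_f, where h(m_f) := inf{ −∫_Ω g dm_f + P(g) : g α-Hölder } and P(g) := lim_{n→∞} (1/n) log[(L_g^n 𝟙)(x₀)] for a fixed point x₀∈Ω. -/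

import Mathlib

/-!
The measure `m = h ν` is invariant because `L_f (h · φ ∘ σ) = φ · L_f h = λ φ h` and `ν` is an
eigenmeasure of the dual operator. For Hölder `g`, bounded distortion `L_g^n 1 x ≤ e^K L_g^n 1 y`
lets `P(g)` be read off `∫ L_g^n 1 dν`. Since `L_g^n 1 = L_f^n (e^{S_n (g - f)})`, this integral is
`λ^n ∫ e^{S_n (g - f)} dν ≥ λ^n ‖h‖_∞⁻¹ e^{n ∫ (g - f) dm}` by Jensen's inequality and invariance,
so `P(g) - ∫ g dm ≥ log λ - ∫ f dm`; for `g = f` equality holds because `∫ L_f^n 1 dν = λ^n`.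
-/

open MeasureTheory Filter Topology

noncomputable def dOmega {M : Type*} [MetricSpace M] (x y : ℕ → M) : ℝ :=
  ∑' n : ℕ, (1 / 2 : ℝ) ^ (n + 1) * dist (x n) (y n)

/-- The sequence `(a, x₁, x₂, …)` obtained by prepending `a` to `x`. -/
def consSeq {M : Type*} (a : M) (x : ℕ → M) : ℕ → M := fun n => Nat.casesOn n a x

/-- The left shift `σ(x₁,x₂,…) = (x₂,x₃,…)`. -/
def shift {M : Type*} (x : ℕ → M) : ℕ → M := fun n => x (n + 1)

noncomputable def Ruelle {M : Type*} [MeasurableSpace M] (μ : Measure M)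
    (f φ : (ℕ → M) → ℝ) : (ℕ → M) → ℝ :=
  fun x => ∫ a, Real.exp (f (consSeq a x)) * φ (consSeq a x) ∂μ

/-- The `n`-th Birkhoff sum `S_n φ = Σ_{j=0}^{n-1} φ ∘ σ^j`. -/
noncomputable def birkhoff {M : Type*} (φ : (ℕ → M) → ℝ) (n : ℕ) : (ℕ → M) → ℝ :=
  fun x => ∑ j ∈ Finset.range n, φ (shift^[j] x)

def IsHolder {M : Type*} [MetricSpace M] (α : ℝ) (f : (ℕ → M) → ℝ) : Prop :=
  ∃ C : ℝ, 0 ≤ C ∧ ∀ x y, |f x - f y| ≤ C * dOmega x y ^ α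

section Symbolic

variable {M : Type*}

@[simp] lemma consSeq_zero (a : M) (x : ℕ → M) : consSeq a x 0 = a := rfl

@[simp] lemma consSeq_succ (a : M) (x : ℕ → M) (n : ℕ) : consSeq a x (n + 1) = x n := rfl

@[simp] lemma shift_consSeq (a : M) (x : ℕ → M) : shift (consSeq a x) = x := rfl

lemma birkhoff_succ (ψ : (ℕ → M) → ℝ) (n : ℕ) (x : ℕ → M) :
    birkhoff ψ (n + 1) x = ψ x + birkhoff ψ n (shift x) := by
  simp only [birkhoff, Finset.sum_range_succ', Function.iterate_succ_apply,
    Function.iterate_zero_apply]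
  exact add_comm _ _

variable [MeasurableSpace M] (μ : Measure M)

lemma ruelle_mul_comp_shift (f u v : (ℕ → M) → ℝ) (x : ℕ → M) :
    Ruelle μ f (fun y => u (shift y) * v y) x = u x * Ruelle μ f v x := by
  simp only [Ruelle, shift_consSeq, mul_left_comm _ (u x)]
  exact integral_const_mul _ _

lemma ruelle_eq_ruelle_exp_sub (f g χ : (ℕ → M) → ℝ) :
    Ruelle μ g χ = Ruelle μ f (fun y => Real.exp (g y - f y) * χ y) := by
  funext x
  simp only [Ruelle, ← mul_assoc, ← Real.exp_add, add_sub_cancel]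

lemma iterate_ruelle_eq_iterate_ruelle_exp_birkhoff (f g χ : (ℕ → M) → ℝ) (n : ℕ) :
    (Ruelle μ g)^[n] χ
      = (Ruelle μ f)^[n] (fun y => Real.exp (birkhoff (fun z => g z - f z) n y) * χ y) := by
  induction n generalizing χ with
  | zero => simp [birkhoff]
  | succ n ih =>
    rw [Function.iterate_succ_apply, Function.iterate_succ_apply, ih]
    congr 1
    funext y
    rw [ruelle_eq_ruelle_exp_sub μ f g,
      ← ruelle_mul_comp_shift μ f (fun z => Real.exp (birkhoff (fun z => g z - f z) n z))]
    simp only [birkhoff_succ, Real.exp_add]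
    congr 1
    funext z
    ring

lemma integral_birkhoff {m : Measure (ℕ → M)} (hσ : MeasurePreserving shift m m)
    {ψ : (ℕ → M) → ℝ} (hψ : Integrable ψ m) (n : ℕ) :
    ∫ x, birkhoff ψ n x ∂m = n * ∫ x, ψ x ∂m := by
  have hj : ∀ j, ∫ x, ψ (shift^[j] x) ∂m = ∫ x, ψ x ∂m := fun j => by
    conv_rhs => rw [← (hσ.iterate j).map_eq]
    exact (integral_map (hσ.iterate j).aemeasurable
      (by rw [(hσ.iterate j).map_eq]; exact hψ.aestronglyMeasurable)).symm
  simp only [birkhoff]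
  rw [integral_finsetSum (f := fun j x => ψ (shift^[j] x)) _
    fun j _ => (hσ.iterate j).integrable_comp_of_integrable hψ]
  simp [hj]

end Symbolic

section SequenceMetric

variable {M : Type*} [MetricSpace M]

lemma dOmega_nonneg (x y : ℕ → M) : 0 ≤ dOmega x y :=
  tsum_nonneg fun _ => by positivity

lemma dOmega_self (x : ℕ → M) : dOmega x x = 0 := by
  simp [dOmega]

variable [CompactSpace M]

lemma summable_half_pow_succ_mul (c : ℝ) : Summable fun n : ℕ => (1 / 2 : ℝ) ^ (n + 1) * c :=
  ((summable_nat_add_iff 1).2 summable_geometric_two).mul_right c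

lemma tsum_half_pow_succ_mul (c : ℝ) : ∑' n : ℕ, (1 / 2 : ℝ) ^ (n + 1) * c = c := by
  simp_rw [pow_succ, tsum_mul_right, tsum_geometric_two]
  ring

lemma half_pow_succ_mul_dist_le (x y : ℕ → M) (n : ℕ) :
    (1 / 2 : ℝ) ^ (n + 1) * dist (x n) (y n)
      ≤ (1 / 2 : ℝ) ^ (n + 1) * Metric.diam (Set.univ : Set M) :=
  mul_le_mul_of_nonneg_left
    (Metric.dist_le_diam_of_mem isCompact_univ.isBounded trivial trivial) (by positivity)

lemma summable_dOmega (x y : ℕ → M) :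
    Summable fun n : ℕ => (1 / 2 : ℝ) ^ (n + 1) * dist (x n) (y n) :=
  (summable_half_pow_succ_mul _).of_nonneg_of_le (fun _ => by positivity)
    (half_pow_succ_mul_dist_le x y)

lemma dOmega_le_diam (x y : ℕ → M) : dOmega x y ≤ Metric.diam (Set.univ : Set M) := by
  calc dOmega x y ≤ ∑' n : ℕ, (1 / 2 : ℝ) ^ (n + 1) * Metric.diam (Set.univ : Set M) :=
        (summable_dOmega x y).tsum_le_tsum (half_pow_succ_mul_dist_le x y)
          (summable_half_pow_succ_mul _)
    _ = _ := tsum_half_pow_succ_mul _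

lemma dOmega_consSeq (a : M) (x y : ℕ → M) :
    dOmega (consSeq a x) (consSeq a y) = 1 / 2 * dOmega x y := by
  rw [dOmega, (summable_dOmega _ _).tsum_eq_zero_add, dOmega, ← tsum_mul_left]
  simp only [consSeq_zero, consSeq_succ, dist_self, mul_zero, zero_add]
  exact tsum_congr fun n => by ring

lemma continuous_dOmega_right (x : ℕ → M) : Continuous (dOmega x) :=
  continuous_tsum (fun n => continuous_const.mul (continuous_const.dist (continuous_apply n)))
    (summable_half_pow_succ_mul _) fun n y => by
      rw [Real.norm_of_nonneg (by positivity)]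
      exact half_pow_succ_mul_dist_le x y n

lemma IsHolder.continuous {α : ℝ} (hα : 0 < α) {g : (ℕ → M) → ℝ} (hg : IsHolder α g) :
    Continuous g := by
  obtain ⟨C, -, hC⟩ := hg
  refine continuous_iff_continuousAt.2 fun x => tendsto_iff_dist_tendsto_zero.2 ?_
  have hbound : Continuous fun y => C * dOmega x y ^ α :=
    continuous_const.mul ((continuous_dOmega_right x).rpow_const fun _ => Or.inr hα.le)
  have hd : Tendsto (fun y => C * dOmega x y ^ α) (𝓝 x) (𝓝 0) := by
    simpa [dOmega_self, Real.zero_rpow hα.ne'] using hbound.tendsto x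
  refine squeeze_zero (fun _ => dist_nonneg) (fun y => ?_) hd
  rw [Real.dist_eq, abs_sub_comm]
  exact hC x y

end SequenceMetric

lemma Continuous.integrable_of_compactSpace {X : Type*} [TopologicalSpace X] [CompactSpace X]
    [MeasurableSpace X] [OpensMeasurableSpace X] {κ : Measure X} [IsFiniteMeasure κ] {ψ : X → ℝ}
    (hψ : Continuous ψ) : Integrable ψ κ :=
  hψ.integrable_of_hasCompactSupport (HasCompactSupport.of_compactSpace ψ)

section Ruelle

variable {M : Type*} [MetricSpace M]

lemma continuous_consSeq : Continuous fun p : M × (ℕ → M) => consSeq p.1 p.2 :=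
  continuous_pi fun n => by cases n with
    | zero => exact continuous_fst
    | succ n => exact (continuous_apply n).comp continuous_snd

lemma continuous_shift : Continuous (shift : (ℕ → M) → ℕ → M) :=
  continuous_pi fun n => continuous_apply (n + 1)

lemma continuous_ruelle_integrand {g φ : (ℕ → M) → ℝ} (hg : Continuous g) (hφ : Continuous φ) :
    Continuous fun p : M × (ℕ → M) => Real.exp (g (consSeq p.1 p.2)) * φ (consSeq p.1 p.2) :=
  (Real.continuous_exp.comp (hg.comp continuous_consSeq)).mul (hφ.comp continuous_consSeq)

lemma continuous_birkhoff {ψ : (ℕ → M) → ℝ} (hψ : Continuous ψ) (n : ℕ) :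
    Continuous (birkhoff ψ n) :=
  continuous_finsetSum _ fun j _ => hψ.comp (continuous_shift.iterate j)

variable [CompactSpace M] [MeasurableSpace M] [BorelSpace M] (μ : Measure M)

lemma integrable_ruelle_integrand [IsFiniteMeasure μ] {g φ : (ℕ → M) → ℝ} (hg : Continuous g)
    (hφ : Continuous φ) (x : ℕ → M) :
    Integrable (fun a => Real.exp (g (consSeq a x)) * φ (consSeq a x)) μ :=
  ((continuous_ruelle_integrand hg hφ).comp (.prodMk_left x)).integrable_of_compactSpace

lemma continuous_ruelle [IsFiniteMeasure μ] {g φ : (ℕ → M) → ℝ} (hg : Continuous g)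
    (hφ : Continuous φ) : Continuous (Ruelle μ g φ) := by
  have := continuous_parametric_integral_of_continuous (μ := μ)
    (f := fun x a => Real.exp (g (consSeq a x)) * φ (consSeq a x))
    ((continuous_ruelle_integrand hg hφ).comp continuous_swap) isCompact_univ
  rw [Measure.restrict_univ] at this
  exact this

lemma continuous_iterate_ruelle [IsFiniteMeasure μ] {g φ : (ℕ → M) → ℝ} (hg : Continuous g)
    (hφ : Continuous φ) (n : ℕ) : Continuous ((Ruelle μ g)^[n] φ) := by
  induction n with
  | zero => exact hφ
  | succ n ih => rw [Function.iterate_succ_apply']; exact continuous_ruelle μ hg ih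

lemma ruelle_pos [IsProbabilityMeasure μ] {g φ : (ℕ → M) → ℝ} (hg : Continuous g)
    (hφ : Continuous φ) (hφ_pos : ∀ y, 0 < φ y) (x : ℕ → M) : 0 < Ruelle μ g φ x := by
  have hpos : ∀ a, 0 < Real.exp (g (consSeq a x)) * φ (consSeq a x) :=
    fun a => mul_pos (Real.exp_pos _) (hφ_pos _)
  refine (integral_pos_iff_support_of_nonneg (fun a => (hpos a).le)
    (integrable_ruelle_integrand μ hg hφ x)).2 ?_
  rw [Function.support_eq_univ fun a => (hpos a).ne', measure_univ]
  exact one_pos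

lemma iterate_ruelle_one_pos [IsProbabilityMeasure μ] {g : (ℕ → M) → ℝ} (hg : Continuous g)
    (n : ℕ) (x : ℕ → M) : 0 < (Ruelle μ g)^[n] 1 x := by
  induction n generalizing x with
  | zero => exact one_pos
  | succ n ih =>
    rw [Function.iterate_succ_apply']
    exact ruelle_pos μ hg (continuous_iterate_ruelle μ hg continuous_const n) ih x

lemma integral_iterate_ruelle [IsFiniteMeasure μ] {f : (ℕ → M) → ℝ} (hf : Continuous f)
    {ν : Measure (ℕ → M)} {lam : ℝ}
    (heig' : ∀ φ : (ℕ → M) → ℝ, Continuous φ → ∫ x, Ruelle μ f φ x ∂ν = lam * ∫ x, φ x ∂ν)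
    {φ : (ℕ → M) → ℝ} (hφ : Continuous φ) (n : ℕ) :
    ∫ x, (Ruelle μ f)^[n] φ x ∂ν = lam ^ n * ∫ x, φ x ∂ν := by
  induction n with
  | zero => simp
  | succ n ih =>
    rw [Function.iterate_succ_apply', heig' _ (continuous_iterate_ruelle μ hf hφ n), ih, pow_succ]
    ring

end Ruelle

section Distortion

variable {M : Type*} [MetricSpace M] [CompactSpace M] [MeasurableSpace M] [BorelSpace M]
  (μ : Measure M)

/-- `L_g` contracts the `α`-Hölder constant of `log φ` by the factor `2^{-α}`, at the price of
adding that of `g`. -/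
lemma ruelle_le_exp_mul_ruelle [IsFiniteMeasure μ] {α C B : ℝ} {g φ : (ℕ → M) → ℝ}
    (hgc : Continuous g) (hg : ∀ x y, |g x - g y| ≤ C * dOmega x y ^ α)
    (hφc : Continuous φ) (hφ0 : ∀ y, 0 ≤ φ y)
    (hφ : ∀ x y, φ x ≤ Real.exp (B * dOmega x y ^ α) * φ y) (x y : ℕ → M) :
    Ruelle μ g φ x ≤ Real.exp ((C + B) * (1 / 2) ^ α * dOmega x y ^ α) * Ruelle μ g φ y := by
  set d := (1 / 2 : ℝ) ^ α * dOmega x y ^ α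
  have hd : ∀ a, dOmega (consSeq a x) (consSeq a y) ^ α = d := fun a => by
    rw [dOmega_consSeq, Real.mul_rpow (by norm_num) (dOmega_nonneg x y)]
  have hpt : ∀ a, Real.exp (g (consSeq a x)) * φ (consSeq a x)
      ≤ Real.exp ((C + B) * d) * (Real.exp (g (consSeq a y)) * φ (consSeq a y)) := by
    intro a
    have hg' : g (consSeq a x) ≤ g (consSeq a y) + C * d := by
      have := (abs_le.1 (hg (consSeq a x) (consSeq a y))).2
      rw [hd] at this
      linarith
    have hφ' := hφ (consSeq a x) (consSeq a y)
    rw [hd] at hφ'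
    calc Real.exp (g (consSeq a x)) * φ (consSeq a x)
        ≤ Real.exp (g (consSeq a y) + C * d) * (Real.exp (B * d) * φ (consSeq a y)) :=
          mul_le_mul (Real.exp_le_exp.2 hg') hφ' (hφ0 _) (Real.exp_pos _).le
      _ = _ := by rw [Real.exp_add, add_mul, Real.exp_add]; ring
  calc Ruelle μ g φ x
      ≤ ∫ a, Real.exp ((C + B) * d) * (Real.exp (g (consSeq a y)) * φ (consSeq a y)) ∂μ :=
        integral_mono (integrable_ruelle_integrand μ hgc hφc x)
          ((integrable_ruelle_integrand μ hgc hφc y).const_mul _) hpt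
    _ = _ := by rw [integral_const_mul, mul_assoc]; rfl

lemma IsHolder.exists_iterate_ruelle_one_le [IsProbabilityMeasure μ] {α : ℝ} (hα : 0 < α)
    {g : (ℕ → M) → ℝ} (hg : IsHolder α g) :
    ∃ K : ℝ, ∀ (n : ℕ) (x y : ℕ → M),
      (Ruelle μ g)^[n] 1 x ≤ Real.exp K * (Ruelle μ g)^[n] 1 y := by
  have hgc := hg.continuous hα
  obtain ⟨C, hC0, hC⟩ := hg
  set r : ℝ := (1 / 2) ^ α
  have hr1 : r < 1 := Real.rpow_lt_one (by norm_num) (by norm_num) hα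
  -- `B` is the fixed point of `B ↦ (C + B) r`: the Hölder bound on `log L_g^n 1` is uniform in `n`.
  set B : ℝ := C * r / (1 - r)
  have hB : (C + B) * r = B := by
    simp only [B]
    field_simp [(sub_pos.2 hr1).ne']
    ring
  have hB0 : 0 ≤ B := div_nonneg (mul_nonneg hC0 (by positivity)) (sub_pos.2 hr1).le
  have key : ∀ (n : ℕ) (x y : ℕ → M),
      (Ruelle μ g)^[n] 1 x ≤ Real.exp (B * dOmega x y ^ α) * (Ruelle μ g)^[n] 1 y := by
    intro n
    induction n with
    | zero =>
      intro x y
      simpa using Real.one_le_exp (mul_nonneg hB0 (Real.rpow_nonneg (dOmega_nonneg x y) α))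
    | succ n ih =>
      intro x y
      rw [Function.iterate_succ_apply', ← hB]
      exact ruelle_le_exp_mul_ruelle μ hgc hC (continuous_iterate_ruelle μ hgc continuous_const n)
        (fun z => (iterate_ruelle_one_pos μ hgc n z).le) ih x y
  refine ⟨B * Metric.diam (Set.univ : Set M) ^ α, fun n x y => (key n x y).trans ?_⟩
  have := iterate_ruelle_one_pos μ hgc n y
  gcongr
  exacts [dOmega_nonneg x y, dOmega_le_diam x y]

end Distortion

section Integrals

variable {X : Type*} [MeasurableSpace X] {ν : Measure X}

lemma exp_neg_mul_integral_le_of_forall_le [IsProbabilityMeasure ν] {F : X → ℝ} {K : ℝ}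
    (hF : Integrable F ν) (hK : ∀ x y, F x ≤ Real.exp K * F y) (y : X) :
    Real.exp (-K) * ∫ x, F x ∂ν ≤ F y := by
  have : ∫ x, F x ∂ν ≤ Real.exp K * F y := by
    calc ∫ x, F x ∂ν ≤ ∫ _, Real.exp K * F y ∂ν :=
          integral_mono hF (integrable_const _) fun x => hK x y
      _ = Real.exp K * F y := by simp
  rw [Real.exp_neg, inv_mul_le_iff₀ (Real.exp_pos K)]
  exact this

lemma le_exp_mul_integral_of_forall_le [IsProbabilityMeasure ν] {F : X → ℝ} {K : ℝ}
    (hF : Integrable F ν) (hK : ∀ x y, F x ≤ Real.exp K * F y) (y : X) :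
    F y ≤ Real.exp K * ∫ x, F x ∂ν := by
  calc F y = ∫ _, F y ∂ν := by simp
    _ ≤ ∫ x, Real.exp K * F x ∂ν := integral_mono (integrable_const _) (hF.const_mul _) (hK y)
    _ = _ := integral_const_mul _ _

lemma integral_withDensity_ofReal {h : X → ℝ} (hh : Measurable h) (h0 : ∀ x, 0 ≤ h x)
    (φ : X → ℝ) :
    ∫ x, φ x ∂ν.withDensity (fun x => ENNReal.ofReal (h x)) = ∫ x, h x * φ x ∂ν := by
  rw [integral_withDensity_eq_integral_toReal_smul hh.ennreal_ofReal
    (ae_of_all _ fun _ => ENNReal.ofReal_lt_top)]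
  simp only [ENNReal.toReal_ofReal (h0 _), smul_eq_mul]

lemma isProbabilityMeasure_withDensity_ofReal {h : X → ℝ} (hh : Integrable h ν)
    (h0 : ∀ x, 0 ≤ h x) (hnorm : ∫ x, h x ∂ν = 1) :
    IsProbabilityMeasure (ν.withDensity fun x => ENNReal.ofReal (h x)) :=
  ⟨by rw [withDensity_apply _ MeasurableSet.univ, setLIntegral_univ,
    ← ofReal_integral_eq_lintegral_ofReal hh (ae_of_all _ h0), hnorm, ENNReal.ofReal_one]⟩

end Integrals

section Invariance

variable {M : Type*} [MetricSpace M] [MeasurableSpace M]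

lemma integral_mul_comp_shift_eq {μ : Measure M} {ν : Measure (ℕ → M)}
    {f h : (ℕ → M) → ℝ} {lam : ℝ} (hlam : lam ≠ 0) (hhc : Continuous h)
    (heig : Ruelle μ f h = fun x => lam * h x)
    (heig' : ∀ φ : (ℕ → M) → ℝ, Continuous φ → ∫ x, Ruelle μ f φ x ∂ν = lam * ∫ x, φ x ∂ν)
    {φ : (ℕ → M) → ℝ} (hφ : Continuous φ) :
    ∫ x, h x * φ (shift x) ∂ν = ∫ x, h x * φ x ∂ν := by
  have key := heig' (fun y => φ (shift y) * h y) ((hφ.comp continuous_shift).mul hhc)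
  simp only [ruelle_mul_comp_shift μ f φ h, heig, mul_left_comm (φ _) lam,
    integral_const_mul] at key
  simp_rw [mul_comm (h _)]
  exact (mul_left_cancel₀ hlam key).symm

variable [CompactSpace M] [BorelSpace M]

lemma measurePreserving_shift_of_integral_comp_shift {m : Measure (ℕ → M)} [IsFiniteMeasure m]
    (hm : ∀ φ : (ℕ → M) → ℝ, Continuous φ → ∫ x, φ (shift x) ∂m = ∫ x, φ x ∂m) :
    MeasurePreserving shift m m :=
  ⟨continuous_shift.measurable, ext_of_forall_integral_eq_of_IsFiniteMeasure fun F => by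
    rw [integral_map continuous_shift.aemeasurable F.continuous.aestronglyMeasurable]
    exact hm F F.continuous⟩

lemma exp_mul_integral_le_integral_exp_birkhoff {m : Measure (ℕ → M)} [IsProbabilityMeasure m]
    (hσ : MeasurePreserving shift m m) {ψ : (ℕ → M) → ℝ} (hψ : Continuous ψ) (n : ℕ) :
    Real.exp (n * ∫ x, ψ x ∂m) ≤ ∫ x, Real.exp (birkhoff ψ n x) ∂m := by
  rw [← integral_birkhoff hσ hψ.integrable_of_compactSpace n]
  exact convexOn_exp.map_integral_le Real.continuous_exp.continuousOn isClosed_univ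
    (ae_of_all _ fun _ => trivial) (continuous_birkhoff hψ n).integrable_of_compactSpace
    (Real.continuous_exp.comp (continuous_birkhoff hψ n)).integrable_of_compactSpace

end Invariance

lemma le_of_tendsto_inv_mul_log {a : ℕ → ℝ} {c K p : ℝ}
    (hp : Tendsto (fun n : ℕ => (n : ℝ)⁻¹ * Real.log (a n)) atTop (𝓝 p))
    (ha : ∀ n : ℕ, Real.exp (n * c - K) ≤ a n) : c ≤ p := by
  have hlim : Tendsto (fun n : ℕ => c - K * (n : ℝ)⁻¹) atTop (𝓝 c) := by
    simpa using tendsto_const_nhds.sub (tendsto_inv_atTop_nhds_zero_nat.const_mul K)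
  refine le_of_tendsto_of_tendsto hlim hp ?_
  filter_upwards [eventually_gt_atTop 0] with n hn
  have hlog := (Real.le_log_iff_exp_le ((Real.exp_pos _).trans_le (ha n))).2 (ha n)
  calc c - K * (n : ℝ)⁻¹ = (n : ℝ)⁻¹ * (n * c - K) := by field_simp
    _ ≤ _ := by gcongr

lemma ge_of_tendsto_inv_mul_log {a : ℕ → ℝ} {c K p : ℝ}
    (hp : Tendsto (fun n : ℕ => (n : ℝ)⁻¹ * Real.log (a n)) atTop (𝓝 p))
    (ha0 : ∀ n : ℕ, 0 < a n) (ha : ∀ n : ℕ, a n ≤ Real.exp (n * c + K)) : p ≤ c := by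
  have hlim : Tendsto (fun n : ℕ => c + K * (n : ℝ)⁻¹) atTop (𝓝 c) := by
    simpa using tendsto_const_nhds.add (tendsto_inv_atTop_nhds_zero_nat.const_mul K)
  refine le_of_tendsto_of_tendsto hp hlim ?_
  filter_upwards [eventually_gt_atTop 0] with n hn
  have hlog := (Real.log_le_iff_le_exp (ha0 n)).2 (ha n)
  calc (n : ℝ)⁻¹ * Real.log (a n) ≤ (n : ℝ)⁻¹ * (n * c + K) := by gcongr
    _ = c + K * (n : ℝ)⁻¹ := by field_simp

section Pressure

variable {M : Type*} [MetricSpace M] [CompactSpace M] [MeasurableSpace M] [BorelSpace M]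
  (μ : Measure M) [IsProbabilityMeasure μ] {ν : Measure (ℕ → M)} [IsProbabilityMeasure ν]
  {f : (ℕ → M) → ℝ} {lam : ℝ}

lemma integral_iterate_ruelle_one (hf : Continuous f)
    (heig' : ∀ φ : (ℕ → M) → ℝ, Continuous φ → ∫ x, Ruelle μ f φ x ∂ν = lam * ∫ x, φ x ∂ν)
    (n : ℕ) : ∫ x, (Ruelle μ f)^[n] 1 x ∂ν = lam ^ n := by
  simpa using integral_iterate_ruelle μ hf heig' continuous_one n

lemma pressure_le_log {α : ℝ} (hα : 0 < α) (hf : IsHolder α f) (hlam : 0 < lam)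
    (heig' : ∀ φ : (ℕ → M) → ℝ, Continuous φ → ∫ x, Ruelle μ f φ x ∂ν = lam * ∫ x, φ x ∂ν)
    {x₀ : ℕ → M} {p : ℝ}
    (hp : Tendsto (fun n : ℕ => (n : ℝ)⁻¹ * Real.log ((Ruelle μ f)^[n] 1 x₀)) atTop (𝓝 p)) :
    p ≤ Real.log lam := by
  have hfc := hf.continuous hα
  obtain ⟨K, hK⟩ := hf.exists_iterate_ruelle_one_le μ hα
  refine ge_of_tendsto_inv_mul_log hp (fun n => iterate_ruelle_one_pos μ hfc n x₀)
    (K := K) fun n => ?_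
  calc (Ruelle μ f)^[n] 1 x₀
      ≤ Real.exp K * ∫ x, (Ruelle μ f)^[n] 1 x ∂ν :=
        le_exp_mul_integral_of_forall_le
          (continuous_iterate_ruelle μ hfc continuous_const n).integrable_of_compactSpace (hK n) x₀
    _ = Real.exp (n * Real.log lam + K) := by
        rw [integral_iterate_ruelle_one μ hfc heig', Real.exp_add, Real.exp_nat_mul,
          Real.exp_log hlam, mul_comm]

lemma log_add_integral_sub_integral_le {α : ℝ} (hα : 0 < α) (hfc : Continuous f) (hlam : 0 < lam)
    (heig' : ∀ φ : (ℕ → M) → ℝ, Continuous φ → ∫ x, Ruelle μ f φ x ∂ν = lam * ∫ x, φ x ∂ν)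
    {h : (ℕ → M) → ℝ} (hhc : Continuous h) {m : Measure (ℕ → M)} [IsProbabilityMeasure m]
    (hm : ∀ φ : (ℕ → M) → ℝ, ∫ x, φ x ∂m = ∫ x, h x * φ x ∂ν)
    (hσ : MeasurePreserving shift m m) {g : (ℕ → M) → ℝ} (hg : IsHolder α g)
    {x₀ : ℕ → M} {p : ℝ}
    (hp : Tendsto (fun n : ℕ => (n : ℝ)⁻¹ * Real.log ((Ruelle μ g)^[n] 1 x₀)) atTop (𝓝 p)) :
    Real.log lam + (∫ x, g x ∂m - ∫ x, f x ∂m) ≤ p := by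
  have hgc := hg.continuous hα
  obtain ⟨K, hK⟩ := hg.exists_iterate_ruelle_one_le μ hα
  obtain ⟨C, hC⟩ := (isCompact_range hhc).bddAbove
  set H := max C 1
  have hH : 0 < H := lt_max_of_lt_right one_pos
  have hhH : ∀ x, h x ≤ H := fun x => (hC ⟨x, rfl⟩).trans (le_max_left _ _)
  set ψ : (ℕ → M) → ℝ := fun z => g z - f z
  have hψ : Continuous ψ := hgc.sub hfc
  have hI : ∫ x, ψ x ∂m = ∫ x, g x ∂m - ∫ x, f x ∂m :=
    integral_sub hgc.integrable_of_compactSpace hfc.integrable_of_compactSpace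
  rw [← hI]
  refine le_of_tendsto_inv_mul_log hp (K := K + Real.log H) fun n => ?_
  have hSn : Continuous fun y => Real.exp (birkhoff ψ n y) :=
    Real.continuous_exp.comp (continuous_birkhoff hψ n)
  have hJensen : H⁻¹ * Real.exp (n * ∫ x, ψ x ∂m) ≤ ∫ y, Real.exp (birkhoff ψ n y) ∂ν := by
    rw [inv_mul_le_iff₀ hH]
    calc Real.exp (n * ∫ x, ψ x ∂m) ≤ ∫ y, Real.exp (birkhoff ψ n y) ∂m :=
          exp_mul_integral_le_integral_exp_birkhoff hσ hψ n
      _ = ∫ y, h y * Real.exp (birkhoff ψ n y) ∂ν := hm _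
      _ ≤ ∫ y, H * Real.exp (birkhoff ψ n y) ∂ν :=
          integral_mono (hhc.mul hSn).integrable_of_compactSpace
            (hSn.integrable_of_compactSpace.const_mul _)
            fun y => mul_le_mul_of_nonneg_right (hhH y) (Real.exp_pos _).le
      _ = H * ∫ y, Real.exp (birkhoff ψ n y) ∂ν := integral_const_mul _ _
  have hchange : ∫ y, (Ruelle μ g)^[n] 1 y ∂ν = lam ^ n * ∫ y, Real.exp (birkhoff ψ n y) ∂ν := by
    rw [iterate_ruelle_eq_iterate_ruelle_exp_birkhoff μ f g]
    simpa using integral_iterate_ruelle μ hfc heig' hSn n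
  calc Real.exp (n * (Real.log lam + ∫ x, ψ x ∂m) - (K + Real.log H))
      = Real.exp (-K) * (lam ^ n * (H⁻¹ * Real.exp (n * ∫ x, ψ x ∂m))) := by
        rw [Real.exp_sub, mul_add, Real.exp_add, Real.exp_add, Real.exp_nat_mul, Real.exp_log hlam,
          Real.exp_log hH, Real.exp_neg]
        field_simp
    _ ≤ Real.exp (-K) * ∫ y, (Ruelle μ g)^[n] 1 y ∂ν := by
        rw [hchange]
        gcongr
    _ ≤ (Ruelle μ g)^[n] 1 x₀ :=
        exp_neg_mul_integral_le_of_forall_le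
          (continuous_iterate_ruelle μ hgc continuous_const n).integrable_of_compactSpace (hK n) x₀

end Pressure

theorem equilibrium_state_attains_supremum_general
    {M : Type*} [MetricSpace M] [CompactSpace M] [MeasurableSpace M] [BorelSpace M]
    (μ : Measure M) [IsProbabilityMeasure μ]
    (α : ℝ) (hα0 : 0 < α)
    (f : (ℕ → M) → ℝ) (hf : IsHolder α f)
    (lam : ℝ) (hlam : 0 < lam)
    (h : (ℕ → M) → ℝ) (hhc : Continuous h) (hhpos : ∀ x, 0 < h x)
    (ν : Measure (ℕ → M)) [IsProbabilityMeasure ν]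
    (hnorm : ∫ x, h x ∂ν = 1)
    (heig : Ruelle μ f h = fun x => lam * h x)
    (heig' : ∀ φ : (ℕ → M) → ℝ, Continuous φ →
      ∫ x, Ruelle μ f φ x ∂ν = lam * ∫ x, φ x ∂ν)
    (x₀ : ℕ → M)
    (P : ((ℕ → M) → ℝ) → ℝ)
    (hP : ∀ g : (ℕ → M) → ℝ, IsHolder α g →
      Tendsto (fun n : ℕ => (n : ℝ)⁻¹ * Real.log ((Ruelle μ g)^[n] 1 x₀))
        atTop (nhds (P g))) :
    (ν.withDensity (fun x => ENNReal.ofReal (h x))).map shift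
        = ν.withDensity (fun x => ENNReal.ofReal (h x)) ∧
    sInf { s : ℝ | ∃ g : (ℕ → M) → ℝ, IsHolder α g ∧
        s = -∫ x, g x ∂(ν.withDensity (fun x => ENNReal.ofReal (h x))) + P g }
      + ∫ x, f x ∂(ν.withDensity (fun x => ENNReal.ofReal (h x)))
      = Real.log lam := by
  have hfc := hf.continuous hα0
  set m := ν.withDensity fun x => ENNReal.ofReal (h x)
  have hm := integral_withDensity_ofReal (ν := ν) hhc.measurable fun x => (hhpos x).le
  have : IsProbabilityMeasure m := isProbabilityMeasure_withDensity_ofReal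
    hhc.integrable_of_compactSpace (fun x => (hhpos x).le) hnorm
  have hσ : MeasurePreserving shift m m :=
    measurePreserving_shift_of_integral_comp_shift fun φ hφ => by
      rw [hm, hm]
      exact integral_mul_comp_shift_eq hlam.ne' hhc heig heig' hφ
  have hvar (g : (ℕ → M) → ℝ) (hg : IsHolder α g) :
      Real.log lam - ∫ x, f x ∂m ≤ -∫ x, g x ∂m + P g := by
    linarith [log_add_integral_sub_integral_le μ hα0 hfc hlam heig' hhc hm hσ hg (hP g hg)]
  have hPf : P f = Real.log lam :=
    le_antisymm (pressure_le_log μ hα0 hf hlam heig' (hP f hf)) (by linarith [hvar f hf])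
  have hleast : IsLeast {s : ℝ | ∃ g, IsHolder α g ∧ s = -∫ x, g x ∂m + P g}
      (Real.log lam - ∫ x, f x ∂m) :=
    ⟨⟨f, hf, by rw [hPf]; ring⟩, fun _ ⟨g, hg, hs⟩ => hs ▸ hvar g hg⟩
  exact ⟨hσ.map_eq, by rw [hleast.csInf_eq]; ring⟩

/-- The equilibrium state m_f = h_f dν_f is shift-invariant and attains the supremum
in the variational principle: h(m_f) + ∫ f dm_f = log λ_f. -/
theorem equilibrium_state_attains_supremum
    {M : Type*} [MetricSpace M] [CompactSpace M] [MeasurableSpace M] [BorelSpace M]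
    (μ : Measure M) [IsProbabilityMeasure μ]
    (hfull : ∀ U : Set M, IsOpen U → U.Nonempty → 0 < μ U)
    (α : ℝ) (hα0 : 0 < α) (hα1 : α < 1)
    (f : (ℕ → M) → ℝ) (hf : IsHolder α f)
    (lam : ℝ) (hlam : 0 < lam)
    (h : (ℕ → M) → ℝ) (hhc : Continuous h) (hhpos : ∀ x, 0 < h x)
    (ν : Measure (ℕ → M)) [IsProbabilityMeasure ν]
    (hnorm : ∫ x, h x ∂ν = 1)
    (heig : Ruelle μ f h = fun x => lam * h x)
    (heig' : ∀ φ : (ℕ → M) → ℝ, Continuous φ →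
      ∫ x, Ruelle μ f φ x ∂ν = lam * ∫ x, φ x ∂ν)
    (x₀ : ℕ → M)
    (P : ((ℕ → M) → ℝ) → ℝ)
    (hP : ∀ g : (ℕ → M) → ℝ, IsHolder α g →
      Tendsto (fun n : ℕ => (n : ℝ)⁻¹ * Real.log ((Ruelle μ g)^[n] 1 x₀))
        atTop (nhds (P g))) :
    (ν.withDensity (fun x => ENNReal.ofReal (h x))).map shift
        = ν.withDensity (fun x => ENNReal.ofReal (h x)) ∧
    sInf { s : ℝ | ∃ g : (ℕ → M) → ℝ, IsHolder α g ∧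
        s = -∫ x, g x ∂(ν.withDensity (fun x => ENNReal.ofReal (h x))) + P g }
      + ∫ x, f x ∂(ν.withDensity (fun x => ENNReal.ofReal (h x)))
      = Real.log lam :=
  equilibrium_state_attains_supremum_general μ α hα0 f hf lam hlam h hhc hhpos ν hnorm heig heig' x₀
    P hP
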